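/- arXiv:2310.12757 — 3 statements merged into one kernel-verified Lean document; each statement's English description precedes it below -/
import Mathlib

section
/- Let J be any coupling of probability measures P₀ and P₁ on ℝ with cdfs F₀, F₁, and suppose P₀ is atomless. Then for every t ∈ ℝ, J({(y₀, y₁) : y₁ − y₀ ≤ t}) ≥ sup_{z ∈ ℝ} max(F₁(z) − F₀(z − t), 0). -/
open MeasureTheory Set Filter

/-- The cumulative distribution function of a measure on ℝ. -/
noncomputable def cdf (P : MeasureTheory.Measure ℝ) (y : ℝ) : ℝ := (P (Set.Iic y)).toReal

/-- The quantile function (generalized inverse cdf) of a measure on ℝ. -/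
noncomputable def quantile (P : MeasureTheory.Measure ℝ) (u : ℝ) : ℝ :=
  sInf {y : ℝ | u ≤ cdf P y}

/- Makarov's bound is a union bound: if `y₁ ≤ z` then either `y₁ - y₀ ≤ t` or `y₀ ≤ z - t`,
so `F₁(z) ≤ J(y₁ - y₀ ≤ t) + F₀(z - t)` for every coupling `J` and every `z`. -/

lemma snd_le_subset_union (z t : ℝ) :
    Prod.snd ⁻¹' Iic z ⊆ {p : ℝ × ℝ | p.2 - p.1 ≤ t} ∪ Prod.fst ⁻¹' Iic (z - t) := by
  intro p (hp : p.2 ≤ z)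
  by_cases h : p.2 - p.1 ≤ t
  · exact Or.inl h
  · exact Or.inr (show p.1 ≤ z - t by linarith)

lemma cdf_map_snd_sub_cdf_map_fst_le (J : Measure (ℝ × ℝ)) [IsFiniteMeasure J] (z t : ℝ) :
    cdf (J.map Prod.snd) z - cdf (J.map Prod.fst) (z - t) ≤ J.real {p | p.2 - p.1 ≤ t} := by
  have hunion : J.real (Prod.snd ⁻¹' Iic z)
      ≤ J.real {p | p.2 - p.1 ≤ t} + J.real (Prod.fst ⁻¹' Iic (z - t)) :=
    (measureReal_mono (snd_le_subset_union z t)).trans (measureReal_union_le _ _)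
  rw [cdf, cdf, ← measureReal_def, ← measureReal_def,
    map_measureReal_apply measurable_snd measurableSet_Iic,
    map_measureReal_apply measurable_fst measurableSet_Iic]
  linarith

theorem treatment_effect_cdf_lower_bound_general
    (P0 P1 : Measure ℝ)
    (J : Measure (ℝ × ℝ)) [IsProbabilityMeasure J]
    (h0 : J.map Prod.fst = P0) (h1 : J.map Prod.snd = P1)
    (t : ℝ) :
    (⨆ z : ℝ, max (cdf P1 z - cdf P0 (z - t)) 0)
      ≤ (J {p : ℝ × ℝ | p.2 - p.1 ≤ t}).toReal := by
  subst h0 h1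
  exact ciSup_le fun z => max_le (cdf_map_snd_sub_cdf_map_fst_le J z t) ENNReal.toReal_nonneg

/-- Makarov lower bound on the cdf of the treatment effect. -/
theorem treatment_effect_cdf_lower_bound
    (P0 P1 : Measure ℝ) [IsProbabilityMeasure P0] [IsProbabilityMeasure P1] [NullSingletonClass P0]
    (J : Measure (ℝ × ℝ)) [IsProbabilityMeasure J]
    (h0 : J.map Prod.fst = P0) (h1 : J.map Prod.snd = P1)
    (t : ℝ) :
    (⨆ z : ℝ, max (cdf P1 z - cdf P0 (z - t)) 0)
      ≤ (J {p : ℝ × ℝ | p.2 - p.1 ≤ t}).toReal :=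
  treatment_effect_cdf_lower_bound_general P0 P1 J h0 h1 t
end

section
/- Let J be any coupling of probability measures P₀ and P₁ on ℝ with cdfs F₀, F₁. Then for every t ∈ ℝ, J({(y₀, y₁) : y₁ − y₀ ≤ t}) ≤ 1 + inf_{z ∈ ℝ} min(F₁(z) − F₀(z − t), 0). -/
open MeasureTheory Set Filter

/-- Makarov upper bound on the cdf of the treatment effect. -/
theorem treatment_effect_cdf_upper_bound
    (P0 P1 : Measure ℝ) [IsProbabilityMeasure P0] [IsProbabilityMeasure P1]
    (J : Measure (ℝ × ℝ)) [IsProbabilityMeasure J]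
    (h0 : J.map Prod.fst = P0) (h1 : J.map Prod.snd = P1)
    (t : ℝ) :
    (J {p : ℝ × ℝ | p.2 - p.1 ≤ t}).toReal
      ≤ 1 + ⨅ z : ℝ, min (cdf P1 z - cdf P0 (z - t)) 0 := by
  have key : ∀ z : ℝ, (J {p : ℝ × ℝ | p.2 - p.1 ≤ t}).toReal
      ≤ 1 + min (cdf P1 z - cdf P0 (z - t)) 0 := by
    intro z
    set A : Set (ℝ × ℝ) := {p : ℝ × ℝ | p.2 - p.1 ≤ t} with hA
    set B : Set (ℝ × ℝ) := {p : ℝ × ℝ | p.1 ≤ z - t} with hB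
    set C : Set (ℝ × ℝ) := {p : ℝ × ℝ | p.2 ≤ z} with hC
    have hBmeas : MeasurableSet B := measurableSet_le measurable_fst measurable_const
    have hCmeas : MeasurableSet C := measurableSet_le measurable_snd measurable_const
    have hsub : A ∩ B ⊆ C := by
      rintro ⟨y0, y1⟩ ⟨ha, hb⟩
      simp only [hA, hB, hC, Set.mem_setOf_eq] at *
      linarith
    have hcdf1 : cdf P1 z = (J C).toReal := by
      rw [cdf, ← h1, Measure.map_apply measurable_snd measurableSet_Iic]
      rfl
    have hcdf0 : cdf P0 (z - t) = (J B).toReal := by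
      rw [cdf, ← h0, Measure.map_apply measurable_fst measurableSet_Iic]
      rfl
    have hineq : J A + J B ≤ 1 + J C := by
      calc J A + J B = J (A ∪ B) + J (A ∩ B) := (measure_union_add_inter A hBmeas).symm
        _ ≤ 1 + J C := add_le_add prob_le_one (measure_mono hsub)
    have hAfin : J A ≠ ⊤ := measure_ne_top J A
    have hBfin : J B ≠ ⊤ := measure_ne_top J B
    have hCfin : J C ≠ ⊤ := measure_ne_top J C
    have hineqR : (J A).toReal + (J B).toReal ≤ 1 + (J C).toReal := by
      have := ENNReal.toReal_mono (by finiteness) hineq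
      rwa [ENNReal.toReal_add hAfin hBfin, ENNReal.toReal_add (by norm_num) hCfin,
        ENNReal.toReal_one] at this
    have hA1 : (J A).toReal ≤ 1 := by
      have := ENNReal.toReal_mono (by norm_num) (prob_le_one (μ := J) (s := A))
      simpa using this
    rw [hcdf1, hcdf0]
    rcases le_total ((J C).toReal - (J B).toReal) 0 with h | h
    · rw [min_eq_left h]; linarith
    · rw [min_eq_right h]; linarith
  have h : (J {p : ℝ × ℝ | p.2 - p.1 ≤ t}).toReal - 1
      ≤ ⨅ z : ℝ, min (cdf P1 z - cdf P0 (z - t)) 0 :=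
    le_ciInf fun z => by linarith [key z]
  linarith
end

section
/- Let J be any coupling of probability measures P₀ and P₁ on ℝ, each with finite second moment, with quantile functions F₀⁻¹, F₁⁻¹. Then ∫ y₀ y₁ dJ(y₀, y₁) ≤ ∫₀¹ F₀⁻¹(u) F₁⁻¹(u) du, and equality holds when J is the comonotone coupling, i.e. the pushforward of Lebesgue measure on (0,1) under u ↦ (F₀⁻¹(u), F₁⁻¹(u)). -/
open MeasureTheory Set Filter

/-!
Hoeffding's identity: with `h x s = 1{s < x} - 1{s < 0}` one has `x = ∫ h x s ds`, so by Fubini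
`∫ x y dK = ∫∫ (∫ h x s * h y t dK) ds dt`, and the inner integral is the orthant probability
`K(X > s, Y > t)` plus terms that depend only on the marginals of `K`. Among couplings of `P₀` and
`P₁` the cross moment is therefore monotone in the orthant probabilities, which are bounded by
`min (P₀(X > s)) (P₁(Y > t))` (Fréchet–Hoeffding). The comonotone coupling attains this bound
because, for `u ∈ (0,1)`, `s < F₀⁻¹ u ↔ F₀ s < u`, so both events are intervals `(F s, 1)`.
-/

section Quantile

variable (P : Measure ℝ) [IsProbabilityMeasure P]

lemma cdf_eq_probabilityTheory_cdf : cdf P = ProbabilityTheory.cdf P := by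
  funext y
  rw [ProbabilityTheory.cdf_eq_real]
  rfl

lemma monotone_cdf : Monotone (cdf P) := by
  rw [cdf_eq_probabilityTheory_cdf]
  exact ProbabilityTheory.monotone_cdf P

lemma nonempty_setOf_le_cdf {u : ℝ} (hu : u < 1) : {y | u ≤ cdf P y}.Nonempty := by
  rw [cdf_eq_probabilityTheory_cdf]
  exact ((ProbabilityTheory.tendsto_cdf_atTop P).eventually (eventually_ge_nhds hu)).exists

lemma bddBelow_setOf_le_cdf {u : ℝ} (hu : 0 < u) : BddBelow {y | u ≤ cdf P y} := by
  obtain ⟨y₀, hy₀⟩ : ∃ y₀, cdf P y₀ < u := by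
    rw [cdf_eq_probabilityTheory_cdf]
    exact ((ProbabilityTheory.tendsto_cdf_atBot P).eventually_lt_const hu).exists
  exact ⟨y₀, fun y hy => le_of_not_gt fun hlt => (hy.trans (monotone_cdf P hlt.le)).not_gt hy₀⟩

lemma le_cdf_quantile {u : ℝ} (hu : u ∈ Ioo (0 : ℝ) 1) : u ≤ cdf P (quantile P u) := by
  have hright : ∀ y > quantile P u, u ≤ cdf P y := fun y hy => by
    obtain ⟨z, hz, hzy⟩ := exists_lt_of_csInf_lt (nonempty_setOf_le_cdf P hu.2) hy
    exact hz.trans (monotone_cdf P hzy.le)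
  have hcont : ContinuousWithinAt (cdf P) (Ioi (quantile P u)) (quantile P u) := by
    rw [cdf_eq_probabilityTheory_cdf]
    exact ((ProbabilityTheory.cdf P).right_continuous _).mono Ioi_subset_Ici_self
  exact ge_of_tendsto hcont.tendsto (eventually_nhdsWithin_of_forall hright)

lemma quantile_le_iff {u y : ℝ} (hu : u ∈ Ioo (0 : ℝ) 1) : quantile P u ≤ y ↔ u ≤ cdf P y :=
  ⟨fun h => (le_cdf_quantile P hu).trans (monotone_cdf P h),
    fun h => csInf_le (bddBelow_setOf_le_cdf P hu.1) h⟩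

lemma lt_quantile_iff {u y : ℝ} (hu : u ∈ Ioo (0 : ℝ) 1) : y < quantile P u ↔ cdf P y < u := by
  rw [← not_le, ← not_le, quantile_le_iff P hu]

lemma monotoneOn_quantile : MonotoneOn (quantile P) (Ioo 0 1) := fun _ hu _ hv huv =>
  (quantile_le_iff P hu).2 (huv.trans (le_cdf_quantile P hv))

lemma preimage_quantile_Iic_inter_Ioo (y : ℝ) :
    quantile P ⁻¹' Iic y ∩ Ioo 0 1 = Iic (cdf P y) ∩ Ioo 0 1 := by
  ext u
  exact and_congr_left (quantile_le_iff P)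

lemma preimage_quantile_Ioi_inter_Ioo (y : ℝ) :
    quantile P ⁻¹' Ioi y ∩ Ioo 0 1 = Ioi (cdf P y) ∩ Ioo 0 1 := by
  ext u
  exact and_congr_left (lt_quantile_iff P)

lemma aemeasurable_quantile : AEMeasurable (quantile P) (volume.restrict (Ioo 0 1)) :=
  aemeasurable_restrict_of_monotoneOn measurableSet_Ioo (monotoneOn_quantile P)

end Quantile

instance : IsProbabilityMeasure (volume.restrict (Ioo (0 : ℝ) 1)) :=
  ⟨by simp [Real.volume_Ioo]⟩

lemma volume_Iic_inter_Ioo {c : ℝ} (hc : c ≤ 1) : volume (Iic c ∩ Ioo 0 1) = ENNReal.ofReal c := by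
  apply le_antisymm
  · calc volume (Iic c ∩ Ioo 0 1) ≤ volume (Ioc 0 c) := measure_mono fun u hu => ⟨hu.2.1, hu.1⟩
      _ = ENNReal.ofReal c := by simp [Real.volume_Ioc]
  · calc ENNReal.ofReal c = volume (Ioo 0 c) := by simp [Real.volume_Ioo]
      _ ≤ volume (Iic c ∩ Ioo 0 1) := measure_mono fun u hu => ⟨hu.2.le, hu.1, hu.2.trans_le hc⟩

theorem map_quantile (P : Measure ℝ) [IsProbabilityMeasure P] :
    (volume.restrict (Ioo 0 1)).map (quantile P) = P := by
  have := Measure.isProbabilityMeasure_map (aemeasurable_quantile P)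
  refine Measure.ext_of_Iic _ _ fun y => ?_
  have hcdf : cdf P y ≤ 1 := by
    rw [cdf_eq_probabilityTheory_cdf]
    exact ProbabilityTheory.cdf_le_one P y
  rw [Measure.map_apply_of_aemeasurable (aemeasurable_quantile P) measurableSet_Iic,
    Measure.restrict_apply' measurableSet_Ioo, preimage_quantile_Iic_inter_Ioo,
    volume_Iic_inter_Ioo hcdf, cdf, ENNReal.ofReal_toReal (measure_ne_top _ _)]

lemma volume_Ioi_cdf_inter_Ioo (P : Measure ℝ) [IsProbabilityMeasure P] (y : ℝ) :
    volume (Ioi (cdf P y) ∩ Ioo 0 1) = P (Ioi y) := by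
  conv_rhs => rw [← map_quantile P]
  rw [Measure.map_apply_of_aemeasurable (aemeasurable_quantile P) measurableSet_Ioi,
    Measure.restrict_apply' measurableSet_Ioo, preimage_quantile_Ioi_inter_Ioo]

lemma measure_prod_le_min_map {α β : Type*} [MeasurableSpace α] [MeasurableSpace β]
    (K : Measure (α × β)) {s : Set α} {t : Set β} (hs : MeasurableSet s) (ht : MeasurableSet t) :
    K (s ×ˢ t) ≤ min (K.map Prod.fst s) (K.map Prod.snd t) := by
  rw [Measure.map_apply measurable_fst hs, Measure.map_apply measurable_snd ht]
  exact le_min (measure_mono fun p hp => hp.1) (measure_mono fun p hp => hp.2)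

noncomputable def comonotoneCoupling (P0 P1 : Measure ℝ) : Measure (ℝ × ℝ) :=
  (volume.restrict (Ioo (0:ℝ) 1)).map (fun u => (quantile P0 u, quantile P1 u))

section Comonotone

variable (P0 P1 : Measure ℝ) [IsProbabilityMeasure P0] [IsProbabilityMeasure P1]

lemma aemeasurable_quantile_prod :
    AEMeasurable (fun u => (quantile P0 u, quantile P1 u)) (volume.restrict (Ioo 0 1)) :=
  (aemeasurable_quantile P0).prodMk (aemeasurable_quantile P1)

instance : IsProbabilityMeasure (comonotoneCoupling P0 P1) :=
  Measure.isProbabilityMeasure_map (aemeasurable_quantile_prod P0 P1)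

lemma map_fst_comonotoneCoupling : (comonotoneCoupling P0 P1).map Prod.fst = P0 := by
  rw [comonotoneCoupling, AEMeasurable.map_map_of_aemeasurable measurable_fst.aemeasurable
    (aemeasurable_quantile_prod P0 P1)]
  exact map_quantile P0

lemma map_snd_comonotoneCoupling : (comonotoneCoupling P0 P1).map Prod.snd = P1 := by
  rw [comonotoneCoupling, AEMeasurable.map_map_of_aemeasurable measurable_snd.aemeasurable
    (aemeasurable_quantile_prod P0 P1)]
  exact map_quantile P1

lemma comonotoneCoupling_prod_Ioi (s t : ℝ) :
    comonotoneCoupling P0 P1 (Ioi s ×ˢ Ioi t) = min (P0 (Ioi s)) (P1 (Ioi t)) := by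
  have hanti : Antitone fun c : ℝ => volume (Ioi c ∩ Ioo 0 1) := fun a b hab =>
    measure_mono (inter_subset_inter_left _ (Ioi_subset_Ioi hab))
  rw [comonotoneCoupling, Measure.map_apply_of_aemeasurable (aemeasurable_quantile_prod P0 P1)
    (measurableSet_Ioi.prod measurableSet_Ioi), Measure.restrict_apply' measurableSet_Ioo,
    mk_preimage_prod, inter_inter_distrib_right, preimage_quantile_Ioi_inter_Ioo,
    preimage_quantile_Ioi_inter_Ioo, ← inter_inter_distrib_right, Ioi_inter_Ioi, hanti.map_max,
    volume_Ioi_cdf_inter_Ioo, volume_Ioi_cdf_inter_Ioo]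

lemma integral_fst_mul_snd_comonotoneCoupling :
    ∫ p, p.1 * p.2 ∂comonotoneCoupling P0 P1 = ∫ u in Ioo 0 1, quantile P0 u * quantile P1 u :=
  integral_map (aemeasurable_quantile_prod P0 P1) (by fun_prop)

end Comonotone

noncomputable def hoeffdingKernel (x s : ℝ) : ℝ := (Ioi s).indicator 1 x - (Ioi s).indicator 1 0

@[fun_prop]
lemma Measurable.hoeffdingKernel {α : Type*} [MeasurableSpace α] {f g : α → ℝ}
    (hf : Measurable f) (hg : Measurable g) : Measurable fun a => hoeffdingKernel (f a) (g a) := by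
  simp only [_root_.hoeffdingKernel, indicator_apply, mem_Ioi, Pi.one_apply]
  exact (Measurable.ite (measurableSet_lt hg hf) measurable_const measurable_const).sub
    (Measurable.ite (measurableSet_lt hg measurable_const) measurable_const measurable_const)

lemma hoeffdingKernel_eq_indicator_sub_indicator (x : ℝ) :
    hoeffdingKernel x = (Ico 0 x).indicator 1 - (Ico x 0).indicator 1 := by
  ext s
  simp only [hoeffdingKernel, indicator, mem_Ioi, mem_Ico, Pi.one_apply, Pi.sub_apply]
  grind

lemma abs_hoeffdingKernel (x s : ℝ) :
    |hoeffdingKernel x s| = (Ico 0 x).indicator 1 s + (Ico x 0).indicator 1 s := by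
  simp only [hoeffdingKernel, indicator, mem_Ioi, mem_Ico, Pi.one_apply]
  grind

lemma integrable_indicator_one_Ico (a b : ℝ) : Integrable ((Ico a b).indicator (1 : ℝ → ℝ)) :=
  (integrableOn_const measure_Ico_lt_top.ne).integrable_indicator measurableSet_Ico

lemma integral_indicator_one_Ico (a b : ℝ) : ∫ s, (Ico a b).indicator 1 s = max (b - a) 0 := by
  rw [integral_indicator_one measurableSet_Ico, Real.volume_real_Ico]

lemma integrable_hoeffdingKernel (x : ℝ) : Integrable (hoeffdingKernel x) := by
  rw [hoeffdingKernel_eq_indicator_sub_indicator]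
  exact (integrable_indicator_one_Ico 0 x).sub (integrable_indicator_one_Ico x 0)

lemma integral_hoeffdingKernel (x : ℝ) : ∫ s, hoeffdingKernel x s = x := by
  rw [hoeffdingKernel_eq_indicator_sub_indicator, integral_sub' (integrable_indicator_one_Ico 0 x)
    (integrable_indicator_one_Ico x 0), integral_indicator_one_Ico, integral_indicator_one_Ico,
    sub_zero, zero_sub]
  exact posPart_sub_negPart x

lemma integral_abs_hoeffdingKernel (x : ℝ) : ∫ s, |hoeffdingKernel x s| = |x| := by
  simp_rw [abs_hoeffdingKernel]
  rw [integral_add (integrable_indicator_one_Ico 0 x) (integrable_indicator_one_Ico x 0),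
    integral_indicator_one_Ico, integral_indicator_one_Ico, sub_zero, zero_sub]
  exact posPart_add_negPart x

lemma integrable_hoeffdingKernel_mul (x y : ℝ) :
    Integrable fun q : ℝ × ℝ => hoeffdingKernel x q.1 * hoeffdingKernel y q.2 := by
  rw [Measure.volume_eq_prod]
  exact (integrable_hoeffdingKernel x).mul_prod (integrable_hoeffdingKernel y)

lemma integral_hoeffdingKernel_mul (x y : ℝ) :
    ∫ q : ℝ × ℝ, hoeffdingKernel x q.1 * hoeffdingKernel y q.2 = x * y := by
  rw [Measure.volume_eq_prod, integral_prod_mul, integral_hoeffdingKernel, integral_hoeffdingKernel]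

lemma integral_norm_hoeffdingKernel_mul (x y : ℝ) :
    ∫ q : ℝ × ℝ, ‖hoeffdingKernel x q.1 * hoeffdingKernel y q.2‖ = ‖x * y‖ := by
  simp_rw [norm_mul, Real.norm_eq_abs]
  rw [Measure.volume_eq_prod,
    integral_prod_mul (fun s => |hoeffdingKernel x s|) (fun t => |hoeffdingKernel y t|),
    integral_abs_hoeffdingKernel, integral_abs_hoeffdingKernel]

section Hoeffding

variable {K : Measure (ℝ × ℝ)}

lemma integrable_hoeffdingKernel_mul_prod [SFinite K] (hK : Integrable (fun p => p.1 * p.2) K) :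
    Integrable (fun z : (ℝ × ℝ) × (ℝ × ℝ) =>
      hoeffdingKernel z.1.1 z.2.1 * hoeffdingKernel z.1.2 z.2.2) (K.prod volume) := by
  rw [integrable_prod_iff (by fun_prop)]
  refine ⟨ae_of_all _ fun p => integrable_hoeffdingKernel_mul p.1 p.2, ?_⟩
  simp_rw [integral_norm_hoeffdingKernel_mul]
  exact hK.norm

lemma integral_fst_mul_snd_eq_integral_integral_hoeffdingKernel [SFinite K]
    (hK : Integrable (fun p => p.1 * p.2) K) :
    ∫ p, p.1 * p.2 ∂K = ∫ q : ℝ × ℝ, ∫ p, hoeffdingKernel p.1 q.1 * hoeffdingKernel p.2 q.2 ∂K :=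
  calc ∫ p, p.1 * p.2 ∂K
      = ∫ p, (∫ q : ℝ × ℝ, hoeffdingKernel p.1 q.1 * hoeffdingKernel p.2 q.2) ∂K :=
        integral_congr_ae (ae_of_all _ fun p => (integral_hoeffdingKernel_mul p.1 p.2).symm)
    _ = _ := integral_integral_swap (integrable_hoeffdingKernel_mul_prod hK)

lemma integral_hoeffdingKernel_fst_mul_snd [IsFiniteMeasure K] (s t : ℝ) :
    ∫ p, hoeffdingKernel p.1 s * hoeffdingKernel p.2 t ∂K =
      K.real (Ioi s ×ˢ Ioi t) - (Ioi t).indicator 1 0 * (K.map Prod.fst).real (Ioi s)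
        - (Ioi s).indicator 1 0 * (K.map Prod.snd).real (Ioi t)
        + (Ioi s).indicator 1 0 * (Ioi t).indicator 1 0 * K.real univ := by
  set a : ℝ := (Ioi s).indicator 1 0
  set b : ℝ := (Ioi t).indicator 1 0
  have hexp : ∀ p : ℝ × ℝ, hoeffdingKernel p.1 s * hoeffdingKernel p.2 t =
      (Ioi s ×ˢ Ioi t).indicator 1 p - b * (Prod.fst ⁻¹' Ioi s).indicator 1 p
        - a * (Prod.snd ⁻¹' Ioi t).indicator 1 p + a * b := by
    rintro ⟨x, y⟩
    rw [indicator_prod_one]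
    change _ = (Ioi s).indicator 1 x * (Ioi t).indicator 1 y - b * (Ioi s).indicator 1 x
      - a * (Ioi t).indicator 1 y + a * b
    simp only [hoeffdingKernel, a, b]
    ring
  have hS : MeasurableSet (Ioi s ×ˢ Ioi t) := measurableSet_Ioi.prod measurableSet_Ioi
  have hA : MeasurableSet (Prod.fst ⁻¹' Ioi s : Set (ℝ × ℝ)) := measurable_fst measurableSet_Ioi
  have hB : MeasurableSet (Prod.snd ⁻¹' Ioi t : Set (ℝ × ℝ)) := measurable_snd measurableSet_Ioi
  have hind {u : Set (ℝ × ℝ)} (hu : MeasurableSet u) : Integrable (u.indicator (1 : ℝ × ℝ → ℝ)) K :=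
    (integrable_const 1).indicator hu
  have hiS := hind hS
  have hiA := (hind hA).const_mul b
  have hiB := (hind hB).const_mul a
  simp_rw [hexp]
  rw [integral_add ?_ (integrable_const _), integral_sub ?_ hiB, integral_sub hiS hiA,
    integral_const_mul, integral_const_mul, integral_indicator_one hS, integral_indicator_one hA,
    integral_indicator_one hB, integral_const, smul_eq_mul,
    map_measureReal_apply measurable_fst measurableSet_Ioi,
    map_measureReal_apply measurable_snd measurableSet_Ioi]
  · ring
  · exact hiS.sub hiA
  · exact (hiS.sub hiA).sub hiB

end Hoeffding

theorem integral_fst_mul_snd_le_of_measure_prod_Ioi_le {K K' : Measure (ℝ × ℝ)} [IsFiniteMeasure K]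
    [IsFiniteMeasure K'] (hfst : K.map Prod.fst = K'.map Prod.fst)
    (hsnd : K.map Prod.snd = K'.map Prod.snd) (hK : Integrable (fun p => p.1 * p.2) K)
    (hK' : Integrable (fun p => p.1 * p.2) K')
    (horth : ∀ s t, K (Ioi s ×ˢ Ioi t) ≤ K' (Ioi s ×ˢ Ioi t)) :
    ∫ p, p.1 * p.2 ∂K ≤ ∫ p, p.1 * p.2 ∂K' := by
  have huniv : K.real univ = K'.real univ := by
    rw [← preimage_univ (f := Prod.fst), ← map_measureReal_apply measurable_fst MeasurableSet.univ,
      ← map_measureReal_apply measurable_fst MeasurableSet.univ, hfst]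
  rw [integral_fst_mul_snd_eq_integral_integral_hoeffdingKernel hK,
    integral_fst_mul_snd_eq_integral_integral_hoeffdingKernel hK']
  refine integral_mono (integrable_hoeffdingKernel_mul_prod hK).swap.integral_prod_left
    (integrable_hoeffdingKernel_mul_prod hK').swap.integral_prod_left fun q => ?_
  rw [integral_hoeffdingKernel_fst_mul_snd, integral_hoeffdingKernel_fst_mul_snd,
    hfst, hsnd, huniv]
  gcongr
  exact ENNReal.toReal_mono (measure_ne_top K' _) (horth q.1 q.2)

lemma integrable_fst_mul_snd {K : Measure (ℝ × ℝ)}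
    (h0 : Integrable (fun y : ℝ => y ^ 2) (K.map Prod.fst))
    (h1 : Integrable (fun y : ℝ => y ^ 2) (K.map Prod.snd)) :
    Integrable (fun p => p.1 * p.2) K := by
  have hL2 {f : ℝ × ℝ → ℝ} (hf : Measurable f) (h : Integrable (fun y : ℝ => y ^ 2) (K.map f)) :
      MemLp f 2 K :=
    (memLp_map_measure_iff aestronglyMeasurable_id hf.aemeasurable).1
      ((memLp_two_iff_integrable_sq aestronglyMeasurable_id).2 h)
  exact (hL2 measurable_fst h0).integrable_mul (hL2 measurable_snd h1)

/-- Upper Fréchet–Hoeffding bound on the cross moment; attained by the comonotone coupling. -/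
theorem cross_moment_upper_bound
    (P0 P1 : Measure ℝ) [IsProbabilityMeasure P0] [IsProbabilityMeasure P1]
    (hm0 : Integrable (fun y : ℝ => y ^ 2) P0) (hm1 : Integrable (fun y : ℝ => y ^ 2) P1)
    (J : Measure (ℝ × ℝ)) [IsProbabilityMeasure J]
    (h0 : J.map Prod.fst = P0) (h1 : J.map Prod.snd = P1) :
    ((∫ p : ℝ × ℝ, p.1 * p.2 ∂J) ≤ ∫ u in Ioo (0:ℝ) 1, quantile P0 u * quantile P1 u) ∧
    (J = (volume.restrict (Ioo (0:ℝ) 1)).map (fun u => (quantile P0 u, quantile P1 u)) →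
      (∫ p : ℝ × ℝ, p.1 * p.2 ∂J) = ∫ u in Ioo (0:ℝ) 1, quantile P0 u * quantile P1 u) := by
  have hC0 := map_fst_comonotoneCoupling P0 P1
  have hC1 := map_snd_comonotoneCoupling P0 P1
  rw [← integral_fst_mul_snd_comonotoneCoupling]
  refine ⟨?_, fun hJ => by rw [hJ]; rfl⟩
  refine integral_fst_mul_snd_le_of_measure_prod_Ioi_le (h0.trans hC0.symm) (h1.trans hC1.symm)
    (integrable_fst_mul_snd (by rwa [h0]) (by rwa [h1]))
    (integrable_fst_mul_snd (by rwa [hC0]) (by rwa [hC1]))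
    fun s t => ?_
  rw [comonotoneCoupling_prod_Ioi, ← h0, ← h1]
  exact measure_prod_le_min_map J measurableSet_Ioi measurableSet_Ioi
end
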